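/- For every m ∈ ℕ₀, the Hammersley point set H_m in base φ with F^m points is a (0,m,2)-net in base φ: for every two-dimensional prime elementary (k_1,k_2)-interval I with ρ(k_1,k_2) ≤ m+2, the number of points of H_m lying in I equals F^(m−|I|). -/

import Mathlib

open Finset

/-- `F m` denotes `F^m := F_{m+2}`, the Fibonacci numbers with shifted index,
so `F^{-2} = 0`, `F^{-1} = 1`, `F^0 = 1`, `F^1 = 2`, … (and `F^m = 0` for `m < -2`). -/
def F (m : ℤ) : ℕ := Nat.fib (m + 2).toNat

lemma F_pos (m : ℤ) (h : -2 < m) : 0 < F m := Nat.fib_pos.mpr (by omega)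

/-- The set of indices of the `1` digits in the (unique) Zeckendorf representation
`n = ∑_{j ∈ zeckSet n} F^j` (no two consecutive indices), computed greedily. -/
def zeckSet : ℕ → Finset ℕ
  | 0 => ∅
  | (n + 1) =>
      insert (Nat.findGreatest (fun i => F i ≤ n + 1) (n + 1))
        (zeckSet (n + 1 - F (Nat.findGreatest (fun i => F i ≤ n + 1) (n + 1))))
decreasing_by exact Nat.sub_lt (Nat.succ_pos n) (F_pos _ (by omega))

/-- The golden ratio `φ = (1 + √5)/2`. -/
noncomputable def phi : ℝ := (1 + Real.sqrt 5) / 2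

/-- `|n|`, the zeroth Zeckendorf digit of `n`. -/
def zd0 (n : ℕ) : ℕ := if 0 ∈ zeckSet n then 1 else 0

/-- `n‾ = ∑_j d_j φ^j`, the `n`-th whole number in base `φ`. -/
noncomputable def zbar (n : ℕ) : ℝ := ∑ j ∈ zeckSet n, phi ^ j

/-- `n ⊙ φ^k = ∑_j d_j F^{j+k}`, the Zeckendorf digit shift. -/
def zshift (n : ℕ) (k : ℤ) : ℕ := ∑ j ∈ zeckSet n, F (j + k)

/-- The `n`-th term of the van der Corput sequence in base φ:
`g_n = ∑_j d_j φ^(−j−1)` where `n = ∑_j d_j F^j` is the Zeckendorf representation. -/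
noncomputable def vdc (n : ℕ) : ℝ := ∑ j ∈ zeckSet n, phi ^ (-(j : ℤ) - 1)

/-- The number of points of the planar point set `P` lying in
`[c₁‾/φ^{k₁}, (c₁+1)‾/φ^{k₁}) × [c₂‾/φ^{k₂}, (c₂+1)‾/φ^{k₂})`. -/
noncomputable def cnt2 (N : ℕ) (P : Fin N → ℝ × ℝ) (k₁ k₂ c₁ c₂ : ℕ) : ℕ :=
  Nat.card {i : Fin N //
    (P i).1 ∈ Set.Ico (zbar c₁ / phi ^ k₁) (zbar (c₁ + 1) / phi ^ k₁) ∧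
    (P i).2 ∈ Set.Ico (zbar c₂ / phi ^ k₂) (zbar (c₂ + 1) / phi ^ k₂)}

/-- A planar point set `P` of `F^m` points is *(k₁,k₂)-equidistributed in base φ* if
every prime elementary `(k₁,k₂)`-interval (each `a_j < F^{k_j}` with first Zeckendorf
digit `d_1` of `a_j` equal to `0`) contains exactly `F^(m−|I|)` of its points, where
`|I| = (k₁ + |a₁|) + (k₂ + |a₂|)`. -/
def Equidistributed2 (m k₁ k₂ : ℕ) (P : Fin (F m) → ℝ × ℝ) : Prop :=
  ∀ a₁ a₂ : ℕ, a₁ < F k₁ → a₂ < F k₂ → 1 ∉ zeckSet a₁ → 1 ∉ zeckSet a₂ →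
    cnt2 (F m) P k₁ k₂ a₁ a₂ =
      F ((m : ℤ) - ((k₁ : ℤ) + (zd0 a₁ : ℤ)) - ((k₂ : ℤ) + (zd0 a₂ : ℤ)))

/-- `ρ(k₁,k₂) = k₁ + k₂ + #{j : k_j > 0}`. -/
def rho2 (k₁ k₂ : ℕ) : ℕ :=
  k₁ + k₂ + (if 0 < k₁ then 1 else 0) + (if 0 < k₂ then 1 else 0)

/-- A planar point set of `F^m` points is a *(t,m,2)-net in base φ* if it is
`(k₁,k₂)`-equidistributed for all `(k₁,k₂)` with `ρ(k₁,k₂) ≤ m+2−t`. -/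
def IsNet2 (t m : ℕ) (P : Fin (F m) → ℝ × ℝ) : Prop :=
  ∀ k₁ k₂ : ℕ, rho2 k₁ k₂ + t ≤ m + 2 → Equidistributed2 m k₁ k₂ P

/-!
Write `n < F^m` through its Zeckendorf digit set, a set of positions below `m` with no two
consecutive. The first coordinate `g_n` lies in the elementary interval of `a₁` at level `k₁`
exactly when the lowest `k₁` digits of `n`, read backwards, are those of `a₁`; the second
coordinate `n‾/φ^m` lies in the interval of `a₂` at level `k₂` exactly when the digits of `n`
from position `s = m - k₂` on are those of `a₂`. Both rest on `(a+1)‾ = a‾ + φ^(-|a|)` (and its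
analogue for shifted Fibonacci sums): the remaining digits of `n` add less than one such step.
So the points in the interval are the digit sets with prescribed low and high parts, free only
in the window of positions from `k₁ + |a₁|` up to `s - |a₂|`, so their number is `F^w` for the
length `w` of that window. If `ρ(k₁,k₂) = m + 2` with one `kⱼ = 0`, the window is empty and
at most one point remains.
-/

lemma Monotone.mem_Ico_succ_iff {α : Type*} [Preorder α] {f : ℕ → α} (hf : Monotone f)
    {x : α} {a c : ℕ} (hc : x ∈ Set.Ico (f c) (f (c + 1))) :
    x ∈ Set.Ico (f a) (f (a + 1)) ↔ a = c :=
  ⟨fun ha => by_contra fun hne => Set.disjoint_left.1 (hf.pairwise_disjoint_on_Ico_succ hne) ha hc,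
    fun h => h ▸ hc⟩

lemma mem_Ico_div_iff {a b c x : ℝ} (hc : 0 < c) :
    x ∈ Set.Ico (a / c) (b / c) ↔ c * x ∈ Set.Ico a b := by
  simp only [Set.mem_Ico, div_le_iff₀ hc, lt_div_iff₀ hc, mul_comm x]

lemma image_sub_eq_iff {H A : Finset ℕ} {s : ℕ} (hH : ∀ j ∈ H, s ≤ j) :
    H.image (· - s) = A ↔ H = A.image (· + s) := by
  constructor <;> rintro rfl <;> rw [image_image]
  · refine (image_congr (g := id) fun j hj => ?_).trans image_id |>.symm
    simp [Nat.sub_add_cancel (hH j hj)]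
  · simp [Function.comp_def]

/-! ### Fibonacci numbers and the golden ratio -/

@[simp] lemma F_neg_one : F (-1) = 1 := rfl

@[simp] lemma F_zero : F 0 = 1 := rfl

@[simp] lemma F_one : F 1 = 2 := rfl

lemma F_add_two {m : ℤ} (h : -2 ≤ m) : F (m + 2) = F (m + 1) + F m := by
  unfold F
  rw [show (m + 2 + 2).toNat = (m + 2).toNat + 2 by omega,
    show (m + 1 + 2).toNat = (m + 2).toNat + 1 by omega, Nat.fib_add_two, add_comm]

lemma F_succ {t : ℤ} (h : -1 ≤ t) : F (t + 1) = F t + F (t - 1) := by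
  have := F_add_two (m := t - 1) (by omega)
  rwa [show t - 1 + 2 = t + 1 by ring, sub_add_cancel] at this

lemma F_mono : Monotone F := fun _ _ h => Nat.fib_mono (by omega)

lemma F_pos_iff {m : ℤ} : 0 < F m ↔ -2 < m := by
  rw [F, Nat.fib_pos]; omega

lemma lt_F_self (n : ℕ) : n < F n := by
  have := Nat.fib_add_two_strictMono.add_le_nat n 0
  simp only [zero_add, add_zero, Nat.fib_two] at this
  simp only [F, show ((n : ℤ) + 2).toNat = n + 2 by omega]
  omega

lemma F_natCast_add_two (i : ℕ) : F ((i + 2 : ℕ) : ℤ) = F ((i + 1 : ℕ) : ℤ) + F i := by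
  push_cast; exact F_add_two (by omega)

lemma neg_one_le_of_lt_F {c : ℕ} {w : ℤ} (hc : c < F w) : -1 ≤ w := by
  have := F_pos_iff.1 (Nat.zero_lt_of_lt hc); omega

lemma phi_eq_goldenRatio : phi = Real.goldenRatio := rfl

lemma phi_pos : 0 < phi := Real.goldenRatio_pos

lemma phi_zpow_add_two (z : ℤ) : phi ^ (z + 2) = phi ^ (z + 1) + phi ^ z := by
  rw [zpow_add₀ phi_pos.ne', zpow_add₀ phi_pos.ne', zpow_one, zpow_two, phi_eq_goldenRatio,
    ← sq, Real.goldenRatio_sq]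
  ring

lemma phi_pow_add_two (i : ℕ) : phi ^ (i + 2) = phi ^ (i + 1) + phi ^ i := by
  rw [phi_eq_goldenRatio, pow_add, Real.goldenRatio_sq]; ring

/-! ### Zeckendorf digit sets -/

def IsZeckendorfSet (S : Finset ℕ) : Prop := ∀ i ∈ S, i + 1 ∉ S

def zeckVal (S : Finset ℕ) : ℕ := ∑ i ∈ S, F i

namespace IsZeckendorfSet

lemma mono {S T : Finset ℕ} (hST : T ⊆ S) (hS : IsZeckendorfSet S) : IsZeckendorfSet T :=
  fun i hi hi1 => hS i (hST hi) (hST hi1)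

lemma union {A B : Finset ℕ} (hA : IsZeckendorfSet A) (hB : IsZeckendorfSet B)
    (hAB : ∀ i ∈ A, ∀ j ∈ B, i + 2 ≤ j) : IsZeckendorfSet (A ∪ B) := by
  intro i hi hi1
  rcases mem_union.1 hi with hi | hi <;> rcases mem_union.1 hi1 with hi1 | hi1
  · exact hA i hi hi1
  · have := hAB i hi _ hi1; omega
  · have := hAB _ hi1 i hi; omega
  · exact hB i hi hi1

lemma image_add {S : Finset ℕ} (hS : IsZeckendorfSet S) (k : ℕ) :
    IsZeckendorfSet (S.image (· + k)) := by
  simp only [IsZeckendorfSet, mem_image, forall_exists_index, and_imp, forall_apply_eq_imp_iff₂]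
  rintro i hi ⟨j, hj, hji⟩
  exact hS i hi (by rwa [← show j = i + 1 by omega])

lemma image_sub {S : Finset ℕ} (hS : IsZeckendorfSet S) {k : ℕ} (hk : ∀ i ∈ S, k ≤ i) :
    IsZeckendorfSet (S.image (· - k)) := by
  simp only [IsZeckendorfSet, mem_image, forall_exists_index, and_imp, forall_apply_eq_imp_iff₂]
  rintro i hi ⟨j, hj, hji⟩
  have := hk i hi; have := hk j hj
  exact hS i hi (by rwa [← show j = i + 1 by omega])

end IsZeckendorfSet

lemma zeckVal_union_of_forall_lt {A B : Finset ℕ} (h : ∀ i ∈ A, ∀ j ∈ B, i < j) :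
    zeckVal (A ∪ B) = zeckVal A + zeckVal B :=
  sum_union (disjoint_left.2 fun i hi hi' => lt_irrefl i (h i hi i hi'))

lemma zeckVal_image_add (S : Finset ℕ) (k : ℕ) :
    zeckVal (S.image (· + k)) = ∑ i ∈ S, F (i + k) := by
  rw [zeckVal, sum_image (fun _ _ _ _ h => by simpa using h)]
  push_cast; rfl

lemma IsZeckendorfSet.lt_of_mem_erase_max' {S : Finset ℕ} (hS : IsZeckendorfSet S)
    (hne : S.Nonempty) {i : ℕ} (hi : i ∈ S.erase (S.max' hne)) : i + 1 < S.max' hne := by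
  have hle := S.le_max' i (mem_of_mem_erase hi)
  have hne' := ne_of_mem_erase hi
  have : i + 1 ≠ S.max' hne := fun h => hS i (mem_of_mem_erase hi) (h ▸ S.max'_mem hne)
  omega

lemma zeckVal_lt_F {S : Finset ℕ} (hS : IsZeckendorfSet S) {k : ℤ} (hk : -1 ≤ k)
    (hSk : ∀ i ∈ S, (i : ℤ) < k) : zeckVal S < F k := by
  induction S using Finset.strongInduction generalizing k with
  | H S ih =>
  rcases S.eq_empty_or_nonempty with rfl | hne
  · simpa [zeckVal, F_pos_iff] using hk.trans_lt' (by norm_num)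
  set t := S.max' hne
  have hrest : zeckVal (S.erase t) < F (t - 1) :=
    ih _ (erase_ssubset (S.max'_mem hne)) (hS.mono (erase_subset _ _)) (by omega)
      fun i hi => by have := hS.lt_of_mem_erase_max' hne hi; omega
  have hsplit : zeckVal S = F t + zeckVal (S.erase t) := (add_sum_erase _ _ (S.max'_mem hne)).symm
  have hrec := F_succ (t := t) (by omega)
  have := F_mono (show (t : ℤ) + 1 ≤ k by have := hSk t (S.max'_mem hne); omega)
  omega

lemma F_le_zeckVal {S : Finset ℕ} {j : ℕ} (hj : j ∈ S) : F j ≤ zeckVal S :=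
  single_le_sum (f := fun i : ℕ => F i) (fun _ _ => Nat.zero_le _) hj

lemma zeckSet_zero : zeckSet 0 = ∅ := by rw [zeckSet]

lemma zeckSet_succ (n : ℕ) :
    zeckSet (n + 1) = insert (Nat.findGreatest (fun i => F i ≤ n + 1) (n + 1))
      (zeckSet (n + 1 - F (Nat.findGreatest (fun i => F i ≤ n + 1) (n + 1)))) := by
  rw [zeckSet]

lemma F_findGreatest_le_and_lt (n : ℕ) :
    F (Nat.findGreatest (fun i => F i ≤ n + 1) (n + 1)) ≤ n + 1 ∧
      n + 1 < F (Nat.findGreatest (fun i => F i ≤ n + 1) (n + 1) + 1) := by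
  set t := Nat.findGreatest (fun i => F i ≤ n + 1) (n + 1)
  refine ⟨Nat.findGreatest_spec (P := fun i : ℕ => F i ≤ n + 1) (Nat.zero_le _) (by simp), ?_⟩
  rcases Nat.lt_or_ge t (n + 1) with h | h
  · by_contra hle
    exact Nat.findGreatest_is_greatest (P := fun i : ℕ => F i ≤ n + 1) (k := t + 1)
      (Nat.lt_succ_self t) h (by push_cast; omega)
  · exact (lt_F_self (n + 1)).trans_le (F_mono (by push_cast; omega))

lemma zeckVal_zeckSet_and_isZeckendorfSet (n : ℕ) :
    zeckVal (zeckSet n) = n ∧ IsZeckendorfSet (zeckSet n) := by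
  induction n using Nat.strong_induction_on with
  | _ n ih =>
  rcases n with _ | n
  · simp [zeckSet_zero, zeckVal, IsZeckendorfSet]
  rw [zeckSet_succ]
  obtain ⟨htle, htlt⟩ := F_findGreatest_le_and_lt n
  set t := Nat.findGreatest (fun i => F i ≤ n + 1) (n + 1)
  have hrec := F_succ (t := t) (by omega)
  obtain ⟨hval, hadm⟩ := ih (n + 1 - F t) (by have := F_pos_iff.2 (by omega : (-2 : ℤ) < t); omega)
  have hlow : ∀ j ∈ zeckSet (n + 1 - F t), j + 1 < t := by
    intro j hj
    have := F_le_zeckVal hj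
    by_contra! h
    have := F_mono (show (t : ℤ) - 1 ≤ j by omega)
    omega
  have htnot : t ∉ zeckSet (n + 1 - F t) := fun h => by have := hlow t h; omega
  refine ⟨?_, ?_⟩
  · rw [zeckVal, sum_insert htnot, ← zeckVal, hval]; omega
  · intro i hi hi1
    rcases mem_insert.1 hi with rfl | hi <;> rcases mem_insert.1 hi1 with h | h
    · omega
    · have := hlow _ h; omega
    · have := hlow _ hi; omega
    · exact hadm i hi h

lemma zeckVal_zeckSet (n : ℕ) : zeckVal (zeckSet n) = n :=
  (zeckVal_zeckSet_and_isZeckendorfSet n).1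

lemma isZeckendorfSet_zeckSet (n : ℕ) : IsZeckendorfSet (zeckSet n) :=
  (zeckVal_zeckSet_and_isZeckendorfSet n).2

/-- The largest digit `t` of a Zeckendorf set pins its value between `F^t` and `F^(t+1)`. -/
lemma IsZeckendorfSet.max'_eq_of_zeckVal_eq {S T : Finset ℕ} (hS : IsZeckendorfSet S)
    (hT : IsZeckendorfSet T) (hSne : S.Nonempty) (hTne : T.Nonempty)
    (h : zeckVal S = zeckVal T) : S.max' hSne = T.max' hTne := by
  have key : ∀ {S T : Finset ℕ} (hS : IsZeckendorfSet S) (hSne : S.Nonempty) (hTne : T.Nonempty),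
      zeckVal S = zeckVal T → T.max' hTne ≤ S.max' hSne := by
    intro S T hS hSne hTne h
    have hlt := zeckVal_lt_F hS (k := S.max' hSne + 1) (by omega)
      (fun i hi => by have := S.le_max' i hi; omega)
    have hle := F_le_zeckVal (T.max'_mem hTne)
    by_contra! hc
    have := F_mono (show ((S.max' hSne : ℕ) : ℤ) + 1 ≤ T.max' hTne by omega)
    omega
  exact le_antisymm (key hT hTne hSne h.symm) (key hS hSne hTne h)

lemma IsZeckendorfSet.eq_of_zeckVal_eq {S T : Finset ℕ} (hS : IsZeckendorfSet S)
    (hT : IsZeckendorfSet T) (h : zeckVal S = zeckVal T) : S = T := by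
  induction S using Finset.strongInduction generalizing T with
  | H S ih =>
  have empty_of_zeckVal_eq_zero : ∀ {U : Finset ℕ}, zeckVal U = 0 → U = ∅ := fun {U} hU =>
    eq_empty_of_forall_notMem fun j hj => by
      have := F_le_zeckVal hj; have := F_pos_iff.2 (by omega : (-2 : ℤ) < j); omega
  rcases S.eq_empty_or_nonempty with rfl | hSne
  · exact (empty_of_zeckVal_eq_zero (h.symm.trans (by simp [zeckVal]))).symm
  rcases T.eq_empty_or_nonempty with rfl | hTne
  · exact empty_of_zeckVal_eq_zero (h.trans (by simp [zeckVal]))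
  have hmax := hS.max'_eq_of_zeckVal_eq hT hSne hTne h
  have herase : S.erase (S.max' hSne) = T.erase (S.max' hSne) := by
    refine ih _ (erase_ssubset (S.max'_mem hSne)) (hS.mono (erase_subset _ _))
      (hT.mono (erase_subset _ _)) ?_
    have hS' := add_sum_erase S (fun i : ℕ => F i) (S.max'_mem hSne)
    have hT' := add_sum_erase T (fun i : ℕ => F i) (hmax ▸ T.max'_mem hTne)
    simp only [zeckVal] at h ⊢
    omega
  rw [← insert_erase (S.max'_mem hSne), herase, insert_erase (hmax ▸ T.max'_mem hTne)]

lemma zeckSet_zeckVal {S : Finset ℕ} (hS : IsZeckendorfSet S) : zeckSet (zeckVal S) = S :=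
  (isZeckendorfSet_zeckSet _).eq_of_zeckVal_eq hS (zeckVal_zeckSet _)

lemma zeckSet_injective : Function.Injective zeckSet := fun a b h => by
  rw [← zeckVal_zeckSet a, h, zeckVal_zeckSet]

lemma eq_zeckVal_iff {a : ℕ} {S : Finset ℕ} (hS : IsZeckendorfSet S) :
    a = zeckVal S ↔ zeckSet a = S :=
  ⟨fun h => h ▸ zeckSet_zeckVal hS, fun h => h ▸ (zeckVal_zeckSet a).symm⟩

lemma lt_F_iff_forall_mem_zeckSet {n : ℕ} {k : ℤ} (hk : -1 ≤ k) :
    n < F k ↔ ∀ j ∈ zeckSet n, (j : ℤ) < k := by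
  refine ⟨fun h j hj => ?_,
    fun h => zeckVal_zeckSet n ▸ zeckVal_lt_F (isZeckendorfSet_zeckSet n) hk h⟩
  have := zeckVal_zeckSet n ▸ F_le_zeckVal hj
  by_contra! hc
  have := F_mono hc
  omega

lemma lt_of_mem_zeckSet_of_lt_F {a k j : ℕ} (ha : a < F k) (hj : j ∈ zeckSet a) : j < k := by
  have := (lt_F_iff_forall_mem_zeckSet (k := k) (by omega)).1 ha j hj; omega

lemma zshift_eq_zeckVal (n k : ℕ) : zshift n k = zeckVal ((zeckSet n).image (· + k)) := by
  rw [zeckVal_image_add]; rfl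

lemma zeckSet_zshift (n k : ℕ) : zeckSet (zshift n k) = (zeckSet n).image (· + k) := by
  rw [zshift_eq_zeckVal, zeckSet_zeckVal ((isZeckendorfSet_zeckSet n).image_add k)]

lemma zshift_zshift (n k l : ℕ) : zshift (zshift n k) l = zshift n (k + l : ℕ) := by
  rw [zshift, zeckSet_zshift, sum_image (fun _ _ _ _ h => by simpa using h), zshift]
  exact sum_congr rfl fun j _ => by push_cast; ring_nf

lemma zbar_zshift (n k : ℕ) : zbar (zshift n k) = phi ^ k * zbar n := by
  rw [zbar, zeckSet_zshift, sum_image (fun _ _ _ _ h => by simpa using h), zbar, mul_sum]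
  exact sum_congr rfl fun j _ => by rw [pow_add, mul_comm]

/-! ### Adding one -/

lemma IsZeckendorfSet.exists_carry {S : Finset ℕ} (hS : IsZeckendorfSet S) {j : ℕ}
    (hj : ∀ i ∈ S, j < i) :
    ∃ S', IsZeckendorfSet S' ∧ ∀ {M : Type} [AddCommMonoid M] (w : ℕ → M),
      (∀ i, w (i + 2) = w (i + 1) + w i) → ∑ i ∈ S', w i = w j + ∑ i ∈ S, w i := by
  induction S using Finset.strongInduction generalizing j with
  | H S ih =>
  by_cases hj1 : j + 1 ∈ S
  · -- `w j + w (j + 1) = w (j + 2)`: carry into position `j + 2`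
    have hT : ∀ i ∈ S.erase (j + 1), j + 2 < i := by
      intro i hi
      have := hj i (mem_of_mem_erase hi)
      have := ne_of_mem_erase hi
      have : i ≠ j + 2 := fun h => hS (j + 1) hj1 (h ▸ mem_of_mem_erase hi)
      omega
    obtain ⟨S', hS', hsum⟩ := ih _ (erase_ssubset hj1) (hS.mono (erase_subset _ _)) hT
    refine ⟨S', hS', fun w hw => ?_⟩
    rw [hsum w hw, hw, ← add_sum_erase S w hj1]
    abel
  · refine ⟨insert j S, fun i hi hi1 => ?_, fun w _ => sum_insert fun h => (hj j h).false⟩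
    rcases mem_insert.1 hi with rfl | hi <;> rcases mem_insert.1 hi1 with h | h
    · omega
    · exact hj1 h
    · have := hj i hi; omega
    · exact hS i hi h

section FibonacciWeights

variable {M : Type} [AddCommMonoid M] {w : ℕ → M} (hw : ∀ i, w (i + 2) = w (i + 1) + w i)
include hw

lemma sum_zeckSet_succ_of_zero_notMem {n : ℕ} (h0 : 0 ∉ zeckSet n) :
    ∑ i ∈ zeckSet (n + 1), w i = w 0 + ∑ i ∈ zeckSet n, w i := by
  obtain ⟨S', hS', hsum⟩ := (isZeckendorfSet_zeckSet n).exists_carry (j := 0)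
    fun i hi => Nat.pos_of_ne_zero fun h => h0 (h ▸ hi)
  have hval : zeckVal S' = n + 1 := by
    rw [zeckVal, hsum (fun i => F i) F_natCast_add_two, ← zeckVal, zeckVal_zeckSet,
      Nat.cast_zero, F_zero, add_comm]
  rw [← hval, zeckSet_zeckVal hS', hsum w hw]

lemma sum_zeckSet_succ_of_zero_mem {n : ℕ} (h0 : 0 ∈ zeckSet n) :
    ∑ i ∈ zeckSet (n + 1), w i + w 0 = w 1 + ∑ i ∈ zeckSet n, w i := by
  have hT : ∀ i ∈ (zeckSet n).erase 0, 1 < i := by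
    intro i hi
    have := ne_of_mem_erase hi
    have : i ≠ 1 := fun h => isZeckendorfSet_zeckSet n 0 h0 (by simpa [h] using mem_of_mem_erase hi)
    omega
  obtain ⟨S', hS', hsum⟩ :=
    ((isZeckendorfSet_zeckSet n).mono (erase_subset _ _)).exists_carry hT
  have hval : zeckVal S' = n + 1 := by
    have h1 : zeckVal S' = F 1 + zeckVal ((zeckSet n).erase 0) := hsum _ F_natCast_add_two
    have h2 : F 0 + zeckVal ((zeckSet n).erase 0) = n :=
      (add_sum_erase _ _ h0).trans (zeckVal_zeckSet n)
    rw [F_one] at h1; rw [F_zero] at h2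
    omega
  rw [← hval, zeckSet_zeckVal hS', hsum w hw, add_assoc, add_comm _ (w 0),
    add_sum_erase _ _ h0]

end FibonacciWeights

lemma zd0_eq_one_iff {a : ℕ} : zd0 a = 1 ↔ 0 ∈ zeckSet a := by
  unfold zd0; split_ifs with h <;> simp [h]

lemma zd0_le_one (a : ℕ) : zd0 a ≤ 1 := by
  unfold zd0; split_ifs <;> omega

lemma one_le_add_zd0_of_mem {a j : ℕ} (hj : j ∈ zeckSet a) : 1 ≤ j + zd0 a := by
  rcases j with _ | j
  · simp [zd0, hj]
  · omega

lemma zshift_succ (a t : ℕ) : zshift (a + 1) t = zshift a t + F (t - zd0 a) := by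
  have hw : ∀ i : ℕ, F ((i + 2 : ℕ) + (t : ℤ)) = F ((i + 1 : ℕ) + (t : ℤ)) + F (i + t) :=
    fun i => by simpa [add_right_comm] using F_add_two (m := i + t) (by omega)
  by_cases h0 : 0 ∈ zeckSet a
  · have := sum_zeckSet_succ_of_zero_mem (w := fun i : ℕ => F (i + t)) hw h0
    have hrec := F_succ (t := t) (by omega)
    simp only [Nat.cast_zero, zero_add, Nat.cast_one, add_comm (1 : ℤ)] at this
    simp only [zshift, zd0, h0, if_true, Nat.cast_one]
    omega
  · simpa [zshift, zd0, h0, add_comm] using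
      sum_zeckSet_succ_of_zero_notMem (w := fun i : ℕ => F (i + t)) hw h0

lemma zbar_succ (a : ℕ) : zbar (a + 1) = zbar a + phi ^ (-(zd0 a : ℤ)) := by
  by_cases h0 : 0 ∈ zeckSet a
  · have := sum_zeckSet_succ_of_zero_mem phi_pow_add_two h0
    have hinv : phi⁻¹ = phi - 1 := by
      rw [phi_eq_goldenRatio, Real.inv_goldenRatio, ← Real.one_sub_goldenRatio]; ring
    simp only [zbar, zd0, h0, if_true, Nat.cast_one, zpow_neg_one, hinv]
    simp only [pow_zero, pow_one] at this
    linarith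
  · simpa [zbar, zd0, h0, add_comm] using sum_zeckSet_succ_of_zero_notMem phi_pow_add_two h0

lemma zbar_strictMono : StrictMono zbar :=
  strictMono_nat_of_lt_succ fun n => by
    rw [zbar_succ]; exact lt_add_of_pos_right _ (zpow_pos phi_pos _)

lemma zshift_strictMono (t : ℕ) : StrictMono fun a => zshift a t :=
  strictMono_nat_of_lt_succ fun n => by
    rw [zshift_succ]
    exact Nat.lt_add_of_pos_right (F_pos_iff.2 (by have := zd0_le_one n; omega))

/-! ### The coordinates of the Hammersley points -/

def revDigits (k : ℕ) (S : Finset ℕ) : Finset ℕ := (range k).filter fun i => k - 1 - i ∈ S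

lemma mem_revDigits {k i : ℕ} {S : Finset ℕ} : i ∈ revDigits k S ↔ i < k ∧ k - 1 - i ∈ S := by
  simp [revDigits]

lemma revDigits_revDigits (k : ℕ) (S : Finset ℕ) :
    revDigits k (revDigits k S) = S.filter (· < k) := by
  ext i
  simp only [mem_revDigits, mem_filter]
  constructor
  · rintro ⟨hi, -, h⟩; exact ⟨by rwa [show k - 1 - (k - 1 - i) = i by omega] at h, hi⟩
  · rintro ⟨h, hi⟩; exact ⟨hi, by omega, by rwa [show k - 1 - (k - 1 - i) = i by omega]⟩

lemma revDigits_filter_lt (k : ℕ) (S : Finset ℕ) :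
    revDigits k (S.filter (· < k)) = revDigits k S := by
  ext i
  simp only [mem_revDigits, mem_filter]
  constructor
  · rintro ⟨hi, h, -⟩; exact ⟨hi, h⟩
  · rintro ⟨hi, h⟩; exact ⟨hi, h, by omega⟩

lemma IsZeckendorfSet.revDigits {S : Finset ℕ} (hS : IsZeckendorfSet S) (k : ℕ) :
    IsZeckendorfSet (revDigits k S) := by
  intro i hi hi1
  rw [mem_revDigits] at hi hi1
  exact hS _ hi1.2 (by rw [show k - 1 - (i + 1) + 1 = k - 1 - i by omega]; exact hi.2)

lemma revDigits_eq_iff {k : ℕ} {S A : Finset ℕ} (hA : ∀ i ∈ A, i < k) :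
    revDigits k S = A ↔ S.filter (· < k) = revDigits k A := by
  constructor
  · rintro rfl; exact (revDigits_revDigits k S).symm
  · intro h
    rw [← revDigits_filter_lt, h, revDigits_revDigits, filter_true_of_mem hA]

lemma add_two_le_of_mem_revDigits {k a i : ℕ} (hi : i ∈ revDigits k (zeckSet a)) :
    i + 2 ≤ k + zd0 a := by
  rw [mem_revDigits] at hi
  by_cases h : i + 1 = k
  · have h0 : 0 ∈ zeckSet a := by rw [show k - 1 - i = 0 by omega] at hi; exact hi.2
    simp only [zd0, h0, if_true]; omega
  · omega

lemma IsZeckendorfSet.sum_zpow_neg_lt {S : Finset ℕ} (hS : IsZeckendorfSet S) {t : ℕ}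
    (ht : ∀ j ∈ S, t ≤ j) : ∑ j ∈ S, phi ^ (-(j : ℤ)) < phi ^ (1 - (t : ℤ)) := by
  induction S using Finset.strongInduction generalizing t with
  | H S ih =>
  rcases S.eq_empty_or_nonempty with rfl | hne
  · simpa using zpow_pos phi_pos _
  set u := S.min' hne
  have hrest : ∀ j ∈ S.erase u, u + 2 ≤ j := by
    intro j hj
    have := S.min'_le j (mem_of_mem_erase hj)
    have := ne_of_mem_erase hj
    have : j ≠ u + 1 := fun h => hS u (S.min'_mem hne) (h ▸ mem_of_mem_erase hj)
    omega
  have hlt := ih _ (erase_ssubset (S.min'_mem hne)) (hS.mono (erase_subset _ _)) hrest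
  have hrec := phi_zpow_add_two (-(u : ℤ) - 1)
  rw [show -(u : ℤ) - 1 + 2 = 1 - u by ring, show -(u : ℤ) - 1 + 1 = -u by ring] at hrec
  rw [show 1 - ((u + 2 : ℕ) : ℤ) = -(u : ℤ) - 1 by push_cast; ring] at hlt
  have hmono : phi ^ (1 - (u : ℤ)) ≤ phi ^ (1 - (t : ℤ)) :=
    zpow_le_zpow_right₀ (phi_eq_goldenRatio ▸ Real.one_lt_goldenRatio).le
      (by have := ht u (S.min'_mem hne); omega)
  rw [← add_sum_erase _ _ (S.min'_mem hne)]
  linarith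

lemma phi_pow_mul_vdc_eq (n k : ℕ) :
    phi ^ k * vdc n = zbar (zeckVal (revDigits k (zeckSet n))) +
      ∑ j ∈ (zeckSet n).filter (k ≤ ·), phi ^ ((k : ℤ) - 1 - j) := by
  rw [zbar, zeckSet_zeckVal ((isZeckendorfSet_zeckSet n).revDigits k), vdc, mul_sum,
    ← sum_filter_add_sum_filter_not _ (· < k)]
  congr 1
  · refine sum_nbij' (k - 1 - ·) (k - 1 - ·) ?_ ?_ ?_ ?_ ?_ <;> intro j hj <;>
      simp only [mem_filter, mem_revDigits] at hj ⊢
    · exact ⟨by omega, by rw [show k - 1 - (k - 1 - j) = j by omega]; exact hj.1⟩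
    · exact ⟨hj.2, by omega⟩
    · omega
    · omega
    · rw [← zpow_natCast, ← zpow_natCast, ← zpow_add₀ phi_pos.ne']
      congr 1; omega
  · refine sum_congr (filter_congr fun j _ => not_lt) fun j _ => ?_
    rw [← zpow_natCast, ← zpow_add₀ phi_pos.ne']
    congr 1; ring

lemma phi_pow_mul_vdc_mem_Ico (n k : ℕ) :
    phi ^ k * vdc n ∈ Set.Ico (zbar (zeckVal (revDigits k (zeckSet n))))
      (zbar (zeckVal (revDigits k (zeckSet n)) + 1)) := by
  set c := zeckVal (revDigits k (zeckSet n))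
  set tail := ∑ j ∈ (zeckSet n).filter (k ≤ ·), phi ^ ((k : ℤ) - 1 - j)
  have htail_nonneg : 0 ≤ tail := sum_nonneg fun j _ => (zpow_pos phi_pos _).le
  -- a leading digit `k - 1` of `n` (i.e. `0 ∈ zeckSet c`) forbids the digit `k`
  have hgap : ∀ j ∈ (zeckSet n).filter (k ≤ ·), k + zd0 c ≤ j := by
    intro j hj
    rw [mem_filter] at hj
    by_cases h0 : 0 ∈ zeckSet c
    · rw [zeckSet_zeckVal ((isZeckendorfSet_zeckSet n).revDigits k), mem_revDigits] at h0
      have : j ≠ k := fun h => isZeckendorfSet_zeckSet n _ h0.2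
        (by rw [show k - 1 - 0 + 1 = j by omega]; exact hj.1)
      have := zd0_le_one c
      omega
    · simp [zd0, h0, hj.2]
  have htail_lt : tail < phi ^ (-(zd0 c : ℤ)) := by
    have hsum := ((isZeckendorfSet_zeckSet n).mono (filter_subset _ _)).sum_zpow_neg_lt hgap
    have hfac :
        tail = phi ^ ((k : ℤ) - 1) * ∑ j ∈ (zeckSet n).filter (k ≤ ·), phi ^ (-(j : ℤ)) := by
      rw [mul_sum]
      exact sum_congr rfl fun j _ => by rw [← zpow_add₀ phi_pos.ne']; ring_nf
    rw [hfac, show -(zd0 c : ℤ) = ((k : ℤ) - 1) + (1 - ((k + zd0 c : ℕ) : ℤ)) by push_cast; ring,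
      zpow_add₀ phi_pos.ne']
    exact mul_lt_mul_of_pos_left hsum (zpow_pos phi_pos _)
  rw [phi_pow_mul_vdc_eq, zbar_succ]
  exact ⟨le_add_of_nonneg_right htail_nonneg, by linarith⟩

lemma vdc_mem_Ico_iff (n k a : ℕ) :
    vdc n ∈ Set.Ico (zbar a / phi ^ k) (zbar (a + 1) / phi ^ k) ↔
      revDigits k (zeckSet n) = zeckSet a := by
  rw [mem_Ico_div_iff (pow_pos phi_pos k),
    zbar_strictMono.monotone.mem_Ico_succ_iff (phi_pow_mul_vdc_mem_Ico n k),
    eq_zeckVal_iff ((isZeckendorfSet_zeckSet n).revDigits k), eq_comm]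

lemma zbar_div_mem_Ico_iff (n m k a : ℕ) :
    zbar n / phi ^ m ∈ Set.Ico (zbar a / phi ^ k) (zbar (a + 1) / phi ^ k) ↔
      zshift n k ∈ Set.Ico (zshift a m) (zshift (a + 1) m) := by
  have hk := pow_pos phi_pos k
  have hm := pow_pos phi_pos m
  simp only [Set.mem_Ico, div_le_div_iff₀ hk hm, div_lt_div_iff₀ hm hk,
    ← zbar_strictMono.le_iff_le, ← zbar_strictMono.lt_iff_lt, zbar_zshift, mul_comm (phi ^ _)]

/-- Splitting the digits of `n` at position `s`: the low part contributes less than one step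
of the high part. -/
lemma zshift_mem_Ico_high (n : ℕ) {s k m : ℕ} (hm : s + k = m) :
    zshift n k ∈ Set.Ico (zshift (zeckVal (((zeckSet n).filter (s ≤ ·)).image (· - s))) m)
      (zshift (zeckVal (((zeckSet n).filter (s ≤ ·)).image (· - s)) + 1) m) := by
  set T := zeckSet n
  have hT := isZeckendorfSet_zeckSet n
  set c := zeckVal ((T.filter (s ≤ ·)).image (· - s))
  have hc : zeckSet c = (T.filter (s ≤ ·)).image (· - s) :=
    zeckSet_zeckVal ((hT.mono (filter_subset _ _)).image_sub fun j hj => (mem_filter.1 hj).2)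
  have hsplit : zshift n k = zeckVal ((T.filter (· < s)).image (· + k)) + zshift c m := by
    rw [zshift, ← sum_filter_add_sum_filter_not T (· < s), zeckVal_image_add, zshift, hc,
      sum_image fun i hi j hj h => by
        simp only [coe_filter, Set.mem_ofPred_eq] at hi hj; omega]
    congr 1
    refine sum_congr (filter_congr fun j _ => not_lt) fun j hj => congrArg F ?_
    have := (mem_filter.1 hj).2
    push_cast [this]; omega
  have hlow : zeckVal ((T.filter (· < s)).image (· + k)) < F (m - zd0 c) := by
    refine zeckVal_lt_F ((hT.mono (filter_subset _ _)).image_add k)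
      (by have := zd0_le_one c; omega) fun i hi => ?_
    obtain ⟨j, hj, rfl⟩ := mem_image.1 hi
    rw [mem_filter] at hj
    by_cases h0 : 0 ∈ zeckSet c
    · -- the digit `s` of `n` is set, so the digit `s - 1` is not
      rw [hc, mem_image] at h0
      obtain ⟨j', hj', hj's⟩ := h0
      rw [mem_filter] at hj'
      have : j + 1 ≠ s := fun h => hT j hj.1 (by rw [h, show s = j' by omega]; exact hj'.1)
      simp only [zd0, hc ▸ mem_image.2 ⟨j', mem_filter.2 hj', hj's⟩, if_true]
      push_cast; omega
    · simp only [zd0, h0, if_false]; push_cast; omega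
  rw [hsplit, zshift_succ]
  exact ⟨Nat.le_add_left _ _, by omega⟩

lemma zshift_mem_Ico_iff {n a s k m : ℕ} (hm : s + k = m) :
    zshift n k ∈ Set.Ico (zshift a m) (zshift (a + 1) m) ↔
      (zeckSet n).filter (s ≤ ·) = (zeckSet a).image (· + s) := by
  have hH : ∀ j ∈ (zeckSet n).filter (s ≤ ·), s ≤ j := fun j hj => (mem_filter.1 hj).2
  rw [(zshift_strictMono m).monotone.mem_Ico_succ_iff (zshift_mem_Ico_high n hm),
    eq_zeckVal_iff (((isZeckendorfSet_zeckSet n).mono (filter_subset _ _)).image_sub hH),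
    eq_comm, image_sub_eq_iff hH]

lemma zshift_succ_mem_Ico_iff {n a m : ℕ} :
    zshift n (m + 1 : ℕ) ∈ Set.Ico (zshift a m) (zshift (a + 1) m) ↔ zshift n (1 : ℕ) = a := by
  rw [show m + 1 = 1 + m by ring, ← zshift_zshift, eq_comm]
  exact (zshift_strictMono m).monotone.mem_Ico_succ_iff
    ⟨le_rfl, zshift_strictMono m (Nat.lt_succ_self _)⟩

lemma zshift_zero_mem_Ico_iff {n m : ℕ} :
    zshift n 0 ∈ Set.Ico (zshift 0 m) (zshift 1 m) ↔ n < F m := by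
  have h0 : zshift 0 m = 0 := by simp [zshift, zeckSet_zero]
  have h1 : zshift 1 m = F m := by simpa [h0, zd0, zeckSet_zero] using zshift_succ 0 m
  have hn : zshift n 0 = n := by simpa [zeckVal_zeckSet] using zshift_eq_zeckVal n 0
  simp [h0, h1, hn]

/-! ### Counting points in elementary intervals -/

lemma mem_image_zeckSet_add_bounds {c u : ℕ} {w : ℤ} (hc : c < F w) {j : ℕ}
    (hj : j ∈ (zeckSet c).image (· + u)) : u ≤ j ∧ (j : ℤ) < u + w := by
  obtain ⟨i, hi, rfl⟩ := mem_image.1 hj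
  have := (lt_F_iff_forall_mem_zeckSet (neg_one_le_of_lt_F hc)).1 hc i hi
  push_cast; omega

/-- The number whose lowest `k` digits are those of `a₁` in reverse order, whose digits from
position `s` on are those of `a₂`, and whose digits in the window in between, starting at the
first position compatible with `a₁`, are those of `c`. -/
def concatDigits (k s a₁ a₂ c : ℕ) : ℕ :=
  zeckVal (revDigits k (zeckSet a₁)) + zshift c (k + zd0 a₁ : ℕ) + zshift a₂ s

section PrescribedDigits

variable {k s k₂ m a₁ a₂ c : ℕ}

lemma concatDigits_strictMono (k s a₁ a₂ : ℕ) : StrictMono (concatDigits k s a₁ a₂) :=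
  fun _ _ h => by
    have := zshift_strictMono (k + zd0 a₁) h
    simp only [concatDigits] at this ⊢
    omega

lemma zeckSet_concatDigits (hc : c < F ((s : ℤ) - (k + zd0 a₁) - zd0 a₂)) :
    zeckSet (concatDigits k s a₁ a₂ c) = revDigits k (zeckSet a₁) ∪
      (zeckSet c).image (· + (k + zd0 a₁)) ∪ (zeckSet a₂).image (· + s) := by
  set u := k + zd0 a₁
  set R := revDigits k (zeckSet a₁)
  set C := (zeckSet c).image (· + u)
  set B := (zeckSet a₂).image (· + s)
  have hw := neg_one_le_of_lt_F hc
  have hRu : ∀ i ∈ R, i + 2 ≤ u := fun i hi => add_two_le_of_mem_revDigits hi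
  have hC : ∀ j ∈ C, u ≤ j ∧ j + zd0 a₂ + 1 ≤ s := fun j hj => by
    have := mem_image_zeckSet_add_bounds hc hj; omega
  have hB : ∀ l ∈ B, s + 1 ≤ l + zd0 a₂ := by
    intro l hl
    obtain ⟨j, hj, rfl⟩ := mem_image.1 hl
    have := one_le_add_zd0_of_mem hj; omega
  have hRC : ∀ i ∈ R, ∀ j ∈ C, i + 2 ≤ j := fun i hi j hj => (hRu i hi).trans (hC j hj).1
  have hRCB : ∀ i ∈ R ∪ C, ∀ l ∈ B, i + 2 ≤ l := by
    intro i hi l hl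
    have := hB l hl
    rcases mem_union.1 hi with hi | hi
    · have := hRu i hi; omega
    · have := hC i hi; omega
  have hadm : IsZeckendorfSet (R ∪ C ∪ B) :=
    (((isZeckendorfSet_zeckSet a₁).revDigits k).union
      ((isZeckendorfSet_zeckSet c).image_add u) hRC).union
      ((isZeckendorfSet_zeckSet a₂).image_add s) hRCB
  have hlt : ∀ {X Y : Finset ℕ}, (∀ i ∈ X, ∀ j ∈ Y, i + 2 ≤ j) → ∀ i ∈ X, ∀ j ∈ Y, i < j :=
    fun h i hi j hj => by have := h i hi j hj; omega
  rw [← zeckSet_zeckVal hadm, zeckVal_union_of_forall_lt (hlt hRCB),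
    zeckVal_union_of_forall_lt (hlt hRC), concatDigits, zshift_eq_zeckVal, zshift_eq_zeckVal]

lemma concatDigits_mem (hks : k ≤ s) (hm : s + k₂ = m) (ha₁ : a₁ < F k) (ha₂ : a₂ < F k₂)
    (hc : c < F ((s : ℤ) - (k + zd0 a₁) - zd0 a₂)) :
    concatDigits k s a₁ a₂ c < F m ∧
      revDigits k (zeckSet (concatDigits k s a₁ a₂ c)) = zeckSet a₁ ∧
      (zeckSet (concatDigits k s a₁ a₂ c)).filter (s ≤ ·) = (zeckSet a₂).image (· + s) := by
  have hR : ∀ i ∈ revDigits k (zeckSet a₁), i < k := fun i hi => (mem_revDigits.1 hi).1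
  have hC : ∀ j ∈ (zeckSet c).image (· + (k + zd0 a₁)), k ≤ j ∧ j < s := fun j hj => by
    have := mem_image_zeckSet_add_bounds hc hj; omega
  have hB : ∀ l ∈ (zeckSet a₂).image (· + s), s ≤ l ∧ l < m := by
    intro l hl
    obtain ⟨j, hj, rfl⟩ := mem_image.1 hl
    have := lt_of_mem_zeckSet_of_lt_F ha₂ hj; omega
  rw [zeckSet_concatDigits hc, revDigits_eq_iff fun i hi => lt_of_mem_zeckSet_of_lt_F ha₁ hi]
  refine ⟨(lt_F_iff_forall_mem_zeckSet (by omega)).2 ?_, ?_, ?_⟩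
  · rw [zeckSet_concatDigits hc]
    intro j hj
    rcases mem_union.1 hj with hj | hj
    · rcases mem_union.1 hj with hj | hj
      · have := hR j hj; omega
      · have := hC j hj; omega
    · have := hB j hj; omega
  · rw [filter_union, filter_union, filter_true_of_mem hR,
      filter_false_of_mem fun j hj => by have := hC j hj; omega,
      filter_false_of_mem fun j hj => by have := hB j hj; omega, union_empty, union_empty]
  · rw [filter_union, filter_union, filter_true_of_mem fun j hj => (hB j hj).1,
      filter_false_of_mem fun j hj => by have := hR j hj; omega,
      filter_false_of_mem fun j hj => by have := hC j hj; omega, empty_union, empty_union]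

-- A set digit `k - 1` (resp. `s`) of `n` forbids the digit `k` (resp. `s - 1`).
lemma free_window_bounds {n : ℕ} (hks : k ≤ s) (ha₁ : a₁ < F k)
    (h₁ : (zeckSet n).filter (· < k) = revDigits k (zeckSet a₁))
    (h₂ : (zeckSet n).filter (s ≤ ·) = (zeckSet a₂).image (· + s)) :
    -1 ≤ (s : ℤ) - (k + zd0 a₁) - zd0 a₂ ∧
      ∀ i ∈ zeckSet n, k ≤ i → i < s → k + zd0 a₁ ≤ i ∧ i + zd0 a₂ + 1 ≤ s := by
  have hT := isZeckendorfSet_zeckSet n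
  have hlow : zd0 a₁ = 1 → k - 1 ∈ zeckSet n ∧ k ∉ zeckSet n := by
    intro h
    have h0 := zd0_eq_one_iff.1 h
    have hk := lt_of_mem_zeckSet_of_lt_F ha₁ h0
    have hmem : k - 1 ∈ zeckSet n := by
      have : k - 1 ∈ (zeckSet n).filter (· < k) := by
        rw [h₁, mem_revDigits, Nat.sub_self]; exact ⟨by omega, h0⟩
      exact (mem_filter.1 this).1
    exact ⟨hmem, fun h' => hT _ hmem (by rwa [Nat.sub_add_cancel (by omega)])⟩
  have hhigh : zd0 a₂ = 1 → s ∈ zeckSet n := by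
    intro h
    have : s ∈ (zeckSet n).filter (s ≤ ·) := by
      rw [h₂]; exact mem_image.2 ⟨0, zd0_eq_one_iff.1 h, zero_add s⟩
    exact (mem_filter.1 this).1
  have h₁' := zd0_le_one a₁
  have h₂' := zd0_le_one a₂
  refine ⟨?_, fun i hi hki his => ⟨?_, ?_⟩⟩
  · by_contra! hlt
    have e₁ : zd0 a₁ = 1 := by omega
    have e₂ : zd0 a₂ = 1 := by omega
    exact (hlow e₁).2 (by rw [show k = s by omega]; exact hhigh e₂)
  · by_cases h : zd0 a₁ = 1
    · have : i ≠ k := fun e => (hlow h).2 (e ▸ hi); omega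
    · omega
  · by_cases h : zd0 a₂ = 1
    · have : i + 1 ≠ s := fun e => hT i hi (e ▸ hhigh h); omega
    · omega

lemma exists_concatDigits_eq {n : ℕ} (hks : k ≤ s) (ha₁ : a₁ < F k)
    (h₁ : revDigits k (zeckSet n) = zeckSet a₁)
    (h₂ : (zeckSet n).filter (s ≤ ·) = (zeckSet a₂).image (· + s)) :
    ∃ c < F ((s : ℤ) - (k + zd0 a₁) - zd0 a₂), concatDigits k s a₁ a₂ c = n := by
  rw [revDigits_eq_iff fun i hi => lt_of_mem_zeckSet_of_lt_F ha₁ hi] at h₁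
  obtain ⟨hw, hwindow⟩ := free_window_bounds hks ha₁ h₁ h₂
  set u := k + zd0 a₁
  set Mid := (zeckSet n).filter fun i => k ≤ i ∧ i < s
  have hMid : ∀ i ∈ Mid, u ≤ i ∧ i + zd0 a₂ + 1 ≤ s := fun i hi => by
    obtain ⟨hi, hki, his⟩ := mem_filter.1 hi
    exact hwindow i hi hki his
  have hMid' : IsZeckendorfSet (Mid.image (· - u)) :=
    ((isZeckendorfSet_zeckSet n).mono (filter_subset _ _)).image_sub fun i hi => (hMid i hi).1
  refine ⟨zeckVal (Mid.image (· - u)), zeckVal_lt_F hMid' hw fun j hj => ?_, ?_⟩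
  · obtain ⟨i, hi, rfl⟩ := mem_image.1 hj
    have := hMid i hi; push_cast [this.1]; omega
  have hsplit : zeckSet n = revDigits k (zeckSet a₁) ∪ Mid ∪ (zeckSet a₂).image (· + s) := by
    ext i
    simp only [← h₁, ← h₂, Mid, mem_union, mem_filter]
    grind
  have hshift : (zeckSet (zeckVal (Mid.image (· - u)))).image (· + u) = Mid := by
    rw [zeckSet_zeckVal hMid', eq_comm, ← image_sub_eq_iff fun i hi => (hMid i hi).1]
  have hR : ∀ i ∈ revDigits k (zeckSet a₁), i < k := fun i hi => (mem_revDigits.1 hi).1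
  have hB : ∀ l ∈ (zeckSet a₂).image (· + s), s ≤ l := fun l hl => by
    obtain ⟨j, -, rfl⟩ := mem_image.1 hl; omega
  have hMid'' : ∀ i ∈ Mid, k ≤ i ∧ i < s := fun i hi => (mem_filter.1 hi).2
  rw [concatDigits, zshift_eq_zeckVal, zshift_eq_zeckVal, hshift,
    ← zeckVal_union_of_forall_lt fun i hi j hj => (hR i hi).trans_le (hMid'' j hj).1,
    ← zeckVal_union_of_forall_lt fun i hi j hj => ?_, ← hsplit, zeckVal_zeckSet]
  have := hB j hj
  rcases mem_union.1 hi with hi | hi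
  · have := hR i hi; omega
  · have := hMid'' i hi; omega

theorem card_filter_prescribed_digits (hks : k ≤ s) (hm : s + k₂ = m) (ha₁ : a₁ < F k)
    (ha₂ : a₂ < F k₂) :
    #{n ∈ range (F m) | revDigits k (zeckSet n) = zeckSet a₁ ∧
        (zeckSet n).filter (s ≤ ·) = (zeckSet a₂).image (· + s)} =
      F ((s : ℤ) - (k + zd0 a₁) - zd0 a₂) := by
  have : {n ∈ range (F m) | revDigits k (zeckSet n) = zeckSet a₁ ∧
      (zeckSet n).filter (s ≤ ·) = (zeckSet a₂).image (· + s)} =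
      (range (F ((s : ℤ) - (k + zd0 a₁) - zd0 a₂))).image (concatDigits k s a₁ a₂) := by
    ext n
    simp only [mem_filter, mem_range, mem_image]
    constructor
    · rintro ⟨-, h₁, h₂⟩
      exact exists_concatDigits_eq hks ha₁ h₁ h₂
    · rintro ⟨c, hc, rfl⟩
      exact concatDigits_mem hks hm ha₁ ha₂ hc
  rw [this, card_image_of_injective _ (concatDigits_strictMono k s a₁ a₂).injective, card_range]

end PrescribedDigits

lemma card_filter_zshift_one_eq {m a : ℕ} (ha : a < F (m + 1 : ℕ)) :
    #{n ∈ range (F m) | zshift n (1 : ℕ) = a} = F (-1 - zd0 a) := by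
  by_cases h0 : 0 ∈ zeckSet a
  · rw [zd0, if_pos h0, show F (-1 - ((1 : ℕ) : ℤ)) = 0 from rfl, card_eq_zero,
      filter_eq_empty_iff]
    intro n _ h
    rw [← h, zeckSet_zshift, mem_image] at h0
    obtain ⟨j, -, hj⟩ := h0
    omega
  have hge : ∀ j ∈ zeckSet a, 1 ≤ j := fun j hj => Nat.one_le_iff_ne_zero.2 fun h => h0 (h ▸ hj)
  set D := (zeckSet a).image (· - 1)
  have hD := (isZeckendorfSet_zeckSet a).image_sub hge
  have hDa : zshift (zeckVal D) (1 : ℕ) = a := zeckSet_injective <| by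
    rw [zeckSet_zshift, zeckSet_zeckVal hD, ← (image_sub_eq_iff hge).1 rfl]
  rw [zd0, if_neg h0, Nat.cast_zero, sub_zero, F_neg_one, card_eq_one]
  refine ⟨zeckVal D, eq_singleton_iff_unique_mem.2 ⟨mem_filter.2 ⟨mem_range.2 ?_, hDa⟩, ?_⟩⟩
  · refine zeckVal_lt_F hD (by omega) fun i hi => ?_
    obtain ⟨j, hj, rfl⟩ := mem_image.1 hi
    have h1 := (lt_F_iff_forall_mem_zeckSet (k := ((m + 1 : ℕ) : ℤ)) (by omega)).1 ha j hj
    have h2 := hge j hj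
    push_cast at h1; omega
  · intro n hn
    exact (zshift_strictMono 1).injective ((mem_filter.1 hn).2.trans hDa.symm)

lemma card_filter_revDigits_succ_eq {m a : ℕ} (ha : a < F (m + 1 : ℕ)) :
    #{n ∈ range (F m) | revDigits (m + 1) (zeckSet n) = zeckSet a} = F (-1 - zd0 a) := by
  have hlt : ∀ {n}, n < F m → ∀ j ∈ zeckSet n, j < m := fun hn j hj => by
    have := (lt_F_iff_forall_mem_zeckSet (by omega)).1 hn j hj; omega
  have ha' : ∀ j ∈ zeckSet a, j < m + 1 := fun j hj => by
    have := (lt_F_iff_forall_mem_zeckSet (by omega)).1 ha j hj; push_cast at this; omega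
  by_cases h0 : 0 ∈ zeckSet a
  · rw [zd0, if_pos h0, show F (-1 - ((1 : ℕ) : ℤ)) = 0 from rfl, card_eq_zero,
      filter_eq_empty_iff]
    intro n hn h
    rw [← h, mem_revDigits] at h0
    have := hlt (mem_range.1 hn) _ h0.2
    omega
  set D := revDigits (m + 1) (zeckSet a)
  have hD := (isZeckendorfSet_zeckSet a).revDigits (m + 1)
  rw [zd0, if_neg h0, Nat.cast_zero, sub_zero, F_neg_one, card_eq_one]
  refine ⟨zeckVal D, eq_singleton_iff_unique_mem.2 ⟨mem_filter.2 ⟨mem_range.2 ?_, ?_⟩, ?_⟩⟩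
  · refine zeckVal_lt_F hD (by omega) fun i hi => ?_
    rw [mem_revDigits] at hi
    have : i ≠ m := fun h => h0 (by simpa [h] using hi.2)
    omega
  · rw [zeckSet_zeckVal hD, revDigits_revDigits, filter_true_of_mem ha']
  · intro n hn
    obtain ⟨hn, h⟩ := mem_filter.1 hn
    rw [revDigits_eq_iff ha', filter_true_of_mem fun j hj => by
      have := hlt (mem_range.1 hn) j hj; omega] at h
    exact (eq_zeckVal_iff hD).2 h

lemma cnt2_eq_card_filter (N : ℕ) (f g : ℕ → ℝ) (k₁ k₂ a₁ a₂ : ℕ) :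
    cnt2 N (fun i => (f i, g i)) k₁ k₂ a₁ a₂ =
      #{n ∈ range N | f n ∈ Set.Ico (zbar a₁ / phi ^ k₁) (zbar (a₁ + 1) / phi ^ k₁) ∧
        g n ∈ Set.Ico (zbar a₂ / phi ^ k₂) (zbar (a₂ + 1) / phi ^ k₂)} := by
  rw [cnt2, Nat.card_eq_fintype_card, Fintype.card_subtype, ← card_map Fin.valEmbedding]
  congr 1
  ext n
  simp only [mem_map, mem_filter, mem_univ, true_and, Fin.valEmbedding_apply, mem_range]
  exact ⟨fun ⟨i, hi, h⟩ => h ▸ ⟨i.isLt, hi⟩, fun ⟨hn, h⟩ => ⟨⟨n, hn⟩, h, rfl⟩⟩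

lemma rho2_le_cases {k₁ k₂ m : ℕ} (h : rho2 k₁ k₂ ≤ m + 2) :
    k₁ + k₂ ≤ m ∨ (k₁ = m + 1 ∧ k₂ = 0) ∨ (k₁ = 0 ∧ k₂ = m + 1) := by
  unfold rho2 at h
  split_ifs at h <;> omega

/-- The Hammersley point set `H_m = {(g_n, n‾/φ^m) : 0 ≤ n < F^m}` in
base φ is a `(0,m,2)`-net in base φ. -/
theorem statement12 (m : ℕ) :
    IsNet2 0 m (fun n : Fin (F m) => (vdc (n : ℕ), zbar (n : ℕ) / phi ^ m)) := by
  intro k₁ k₂ hρ a₁ a₂ ha₁ ha₂ _ _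
  rw [cnt2_eq_card_filter (F m) vdc (fun n => zbar n / phi ^ m)]
  simp only [vdc_mem_Ico_iff, zbar_div_mem_Ico_iff]
  rcases rho2_le_cases (by simpa using hρ) with h | ⟨rfl, rfl⟩ | ⟨rfl, rfl⟩
  · obtain ⟨s, rfl⟩ : ∃ s, m = s + k₂ := ⟨m - k₂, by omega⟩
    simp only [zshift_mem_Ico_iff rfl]
    rw [card_filter_prescribed_digits (by omega) rfl ha₁ ha₂]
    congr 1; push_cast; ring
  · obtain rfl : a₂ = 0 := by simpa using ha₂
    rw [filter_congr fun n hn => by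
      rw [Nat.cast_zero, zero_add, zshift_zero_mem_Ico_iff, and_iff_left (mem_range.1 hn)],
      card_filter_revDigits_succ_eq ha₁]
    congr 1; simp [zd0, zeckSet_zero]; ring
  · obtain rfl : a₁ = 0 := by simpa using ha₁
    simp only [zshift_succ_mem_Ico_iff, revDigits, range_zero, filter_empty, zeckSet_zero,
      true_and]
    rw [card_filter_zshift_one_eq ha₂]
    congr 1; simp [zd0, zeckSet_zero]; ring
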